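/- Lower bound on the step length by the new (sub)gradient: under the setting of the composite step, let f have L-Lipschitz-continuous Hessian (L > 0), let s be a subgradient of ψ at x, let H be symmetric PSD with ‖H − ∇²f(x)‖ ≤ β for some β ≥ 0, and let α ≥ √(L‖∇f(x) + s‖/2) + β with α > 0. If x⁺ is a composite step from x with parameters (H, α), then r := ‖x⁺ − x‖ satisfies r ≥ ‖F'(x⁺)‖/(2α), where F'(x⁺) := ∇f(x⁺) − ∇f(x) − (H + αI)(x⁺ − x). -/

import Mathlib

/-!
Testing the composite-step optimality condition at `y = x` against the subgradient inequality at
`x⁺`, and using `H ⪰ 0`, gives `α r² ≤ -⟪∇f(x) + s, x⁺ - x⟫`, hence `α r ≤ ‖∇f(x) + s‖`.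
Together with `α - β ≥ √(L‖∇f(x) + s‖/2)` this yields `L r / 2 ≤ α - β`. Splitting
`F'(x⁺) = [∇f(x⁺) - ∇f(x) - ∇²f(x)(x⁺ - x)] + (∇²f(x) - H)(x⁺ - x) - α(x⁺ - x)` and bounding the
three terms by `L r² / 2`, `β r` and `α r` then gives `‖F'(x⁺)‖ ≤ 2 α r`. The first bound is
Taylor's formula with Lipschitz derivative, obtained without integration by fencing
`t ↦ ∇f(x + t d) - ∇f(x) - t ∇²f(x) d` with `t ↦ L t² ‖d‖² / 2`.
-/

open scoped RealInnerProductSpace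
open Real Set

def IsSymmPSD {n : ℕ} (H : EuclideanSpace ℝ (Fin n) →L[ℝ] EuclideanSpace ℝ (Fin n)) : Prop :=
  (∀ u v, ⟪H u, v⟫ = ⟪u, H v⟫) ∧ ∀ u, 0 ≤ ⟪H u, u⟫

def IsSubgradAt {n : ℕ} (ψ : EuclideanSpace ℝ (Fin n) → ℝ)
    (s x : EuclideanSpace ℝ (Fin n)) : Prop :=
  ∀ y, ψ x + ⟪s, y - x⟫ ≤ ψ y

def CompositeStep {n : ℕ} (g : EuclideanSpace ℝ (Fin n))
    (H : EuclideanSpace ℝ (Fin n) →L[ℝ] EuclideanSpace ℝ (Fin n)) (α : ℝ)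
    (ψ : EuclideanSpace ℝ (Fin n) → ℝ) (x xp : EuclideanSpace ℝ (Fin n)) : Prop :=
  ∀ y, ψ xp ≤ ⟪g + (H (xp - x) + α • (xp - x)), y - xp⟫ + ψ y

noncomputable def hess {n : ℕ} (f : EuclideanSpace ℝ (Fin n) → ℝ)
    (x : EuclideanSpace ℝ (Fin n)) :
    EuclideanSpace ℝ (Fin n) →L[ℝ] EuclideanSpace ℝ (Fin n) :=
  fderiv ℝ (gradient f) x

theorem ContDiff.gradient {E : Type*} [NormedAddCommGroup E] [InnerProductSpace ℝ E]
    [CompleteSpace E] {f : E → ℝ} {m n : WithTop ℕ∞} (hf : ContDiff ℝ n f) (hmn : m + 1 ≤ n) :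
    ContDiff ℝ m (gradient f) :=
  (InnerProductSpace.toDual ℝ E).symm.contDiff.comp (hf.fderiv_right hmn)

theorem norm_image_add_sub_sub_fderiv_le {E F : Type*} [NormedAddCommGroup E] [NormedSpace ℝ E]
    [NormedAddCommGroup F] [NormedSpace ℝ F] {g : E → F} (hg : Differentiable ℝ g) {L : ℝ} {x : E}
    (hLip : ∀ y, ‖fderiv ℝ g y - fderiv ℝ g x‖ ≤ L * ‖y - x‖) (d : E) :
    ‖g (x + d) - g x - fderiv ℝ g x d‖ ≤ L / 2 * ‖d‖ ^ 2 := by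
  set φ : ℝ → F := fun t ↦ g (x + t • d) - g x - t • fderiv ℝ g x d
  have hφ : ∀ t, HasDerivAt φ (fderiv ℝ g (x + t • d) d - fderiv ℝ g x d) t := by
    intro t
    have hline : HasDerivAt (fun t : ℝ ↦ x + t • d) d t := by
      simpa using ((hasDerivAt_id t).smul_const d).const_add x
    exact (((hg _).hasFDerivAt.comp_hasDerivAt t hline).sub_const _).sub
      (by simpa using (hasDerivAt_id t).smul_const (fderiv ℝ g x d))
  have hB : ∀ t : ℝ, HasDerivAt (fun t ↦ L / 2 * t ^ 2 * ‖d‖ ^ 2) (L * t * ‖d‖ ^ 2) t := by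
    intro t
    exact (((hasDerivAt_pow 2 t).const_mul (L / 2)).mul_const (‖d‖ ^ 2)).congr_deriv
      (by push_cast; ring)
  have hbound : ∀ t ∈ Ico (0 : ℝ) 1, ‖fderiv ℝ g (x + t • d) d - fderiv ℝ g x d‖ ≤ L * t * ‖d‖ ^ 2 := by
    rintro t ⟨ht, -⟩
    calc ‖fderiv ℝ g (x + t • d) d - fderiv ℝ g x d‖
        = ‖(fderiv ℝ g (x + t • d) - fderiv ℝ g x) d‖ := rfl
      _ ≤ ‖fderiv ℝ g (x + t • d) - fderiv ℝ g x‖ * ‖d‖ := ContinuousLinearMap.le_opNorm _ _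
      _ ≤ L * ‖x + t • d - x‖ * ‖d‖ := by gcongr; exact hLip _
      _ = L * t * ‖d‖ ^ 2 := by
        rw [add_sub_cancel_left, norm_smul, norm_of_nonneg ht]; ring
  simpa [φ] using image_norm_le_of_norm_deriv_right_le_deriv_boundary
    (fun t _ ↦ (hφ t).continuousAt.continuousWithinAt) (fun t _ ↦ (hφ t).hasDerivWithinAt)
    (by simp [φ]) hB hbound (right_mem_Icc.2 zero_le_one)

theorem CompositeStep.mul_norm_sub_le {n : ℕ} {g s x xp : EuclideanSpace ℝ (Fin n)}
    {H : EuclideanSpace ℝ (Fin n) →L[ℝ] EuclideanSpace ℝ (Fin n)} {α : ℝ}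
    {ψ : EuclideanSpace ℝ (Fin n) → ℝ} (hstep : CompositeStep g H α ψ x xp)
    (hs : IsSubgradAt ψ s x) (hH : ∀ u, 0 ≤ ⟪H u, u⟫) :
    α * ‖xp - x‖ ≤ ‖g + s‖ := by
  set d := xp - x with hd
  have hquad : α * ‖d‖ ^ 2 ≤ -⟪g + s, d⟫ := by
    have hopt := hstep x
    have hsub := hs xp
    rw [show x - xp = -d by rw [hd, neg_sub], inner_neg_right, inner_add_left, inner_add_left,
      real_inner_smul_left, real_inner_self_eq_norm_sq] at hopt
    rw [inner_add_left]
    linarith [hH d]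
  have hcs : -⟪g + s, d⟫ ≤ ‖g + s‖ * ‖d‖ := (neg_le_abs _).trans (abs_real_inner_le_norm _ _)
  rcases (norm_nonneg d).eq_or_lt with hzero | hpos
  · simp [← hzero]
  · exact le_of_mul_le_mul_right (by linarith) hpos

theorem half_mul_le_sub_of_sqrt_add_le {L A α β r : ℝ} (hL : 0 ≤ L) (hβ : 0 ≤ β) (hα : 0 < α)
    (h : √(L * A / 2) + β ≤ α) (hr : α * r ≤ A) :
    L / 2 * r ≤ α - β := by
  obtain ⟨hαβ, hsq⟩ := Real.sqrt_le_iff.1 (le_sub_iff_add_le.2 h)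
  refine le_of_mul_le_mul_left ?_ hα
  calc α * (L / 2 * r) = L / 2 * (α * r) := by ring
    _ ≤ L / 2 * A := by gcongr
    _ = L * A / 2 := by ring
    _ ≤ (α - β) ^ 2 := hsq
    _ ≤ α * (α - β) := by nlinarith

theorem composite_step_length_lower_bound {n : ℕ}
    (f : EuclideanSpace ℝ (Fin n) → ℝ) (hf : ContDiff ℝ 2 f)
    (L : ℝ) (hL : 0 < L)
    (hLip : ∀ x y, ‖hess f x - hess f y‖ ≤ L * ‖x - y‖)
    (ψ : EuclideanSpace ℝ (Fin n) → ℝ)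
    (x xp s : EuclideanSpace ℝ (Fin n)) (hs : IsSubgradAt ψ s x)
    (H : EuclideanSpace ℝ (Fin n) →L[ℝ] EuclideanSpace ℝ (Fin n)) (hH : IsSymmPSD H)
    (β : ℝ) (hβ : 0 ≤ β) (hHerr : ‖H - hess f x‖ ≤ β)
    (α : ℝ) (hαpos : 0 < α)
    (hα : Real.sqrt (L * ‖gradient f x + s‖ / 2) + β ≤ α)
    (hstep : CompositeStep (gradient f x) H α ψ x xp) :
    ‖gradient f xp - gradient f x - (H (xp - x) + α • (xp - x))‖ / (2 * α)
      ≤ ‖xp - x‖ := by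
  set d := xp - x with hd
  have hcurv : L / 2 * ‖d‖ ≤ α - β :=
    half_mul_le_sub_of_sqrt_add_le hL.le hβ hαpos hα (hstep.mul_norm_sub_le hs hH.2)
  have htaylor : ‖gradient f xp - gradient f x - hess f x d‖ ≤ L / 2 * ‖d‖ ^ 2 := by
    have := norm_image_add_sub_sub_fderiv_le
      ((hf.gradient (m := 1) le_rfl).differentiable one_ne_zero) (fun y ↦ hLip y x) d
    rwa [hd, add_sub_cancel] at this
  have hmodel : ‖(hess f x - H) d‖ ≤ β * ‖d‖ :=
    ((hess f x - H).le_opNorm d).trans (by rw [norm_sub_rev]; gcongr)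
  have hsplit : gradient f xp - gradient f x - (H d + α • d)
      = (gradient f xp - gradient f x - hess f x d) + (hess f x - H) d - α • d := by
    rw [sub_apply]
    abel
  rw [div_le_iff₀ (by positivity), hsplit]
  calc _ ≤ L / 2 * ‖d‖ ^ 2 + β * ‖d‖ + α * ‖d‖ :=
        (norm_sub_le _ _).trans (add_le_add (norm_add_le_of_le htaylor hmodel)
          (by rw [norm_smul, norm_of_nonneg hαpos.le]))
    _ ≤ ‖d‖ * (2 * α) := by nlinarith [mul_le_mul_of_nonneg_right hcurv (norm_nonneg d)]
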